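/- arXiv:2406.01324 — 2 statements merged into one kernel-verified Lean document; each statement's English description precedes it below -/
import Mathlib

section
/- Let μ be a probability measure on ℝⁿ and ψ > 0 a constant such that for every Lipschitz function f : ℝⁿ → ℝ there exists c ∈ ℝ with ∫ |f − c| dμ ≤ ψ · ∫ |∇f| dμ. Then μ satisfies the Poincaré inequality with constant 4ψ²: for every Lipschitz differentiable function f : ℝⁿ → ℝ, Var_μ(f) ≤ 4ψ² · ∫ |∇f|² dμ. -/
open MeasureTheory ENNReal

noncomputable section

def tphi (R t : ℝ) : ℝ :=
  t * |t| + 2*R*t - ((t - R) * |t - R| + (t + R) * |t + R|) / 2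

def tphi' (R t : ℝ) : ℝ := 2 * min |t| R

lemma hasDerivAt_mul_abs (t : ℝ) : HasDerivAt (fun s : ℝ => s * |s|) (2 * |t|) t := by
  rcases lt_trichotomy t 0 with ht | rfl | ht
  · have he : (fun s : ℝ => s * |s|) =ᶠ[nhds t] (fun s => -(s*s)) := by
      filter_upwards [eventually_lt_nhds ht] with s hs
      rw [abs_of_neg hs]; ring
    have h2 : HasDerivAt (fun s : ℝ => -(s*s)) (2 * |t|) t := by
      have := ((hasDerivAt_id t).mul (hasDerivAt_id t)).neg
      simp only [id_eq] at this
      rw [abs_of_neg ht]; exact this.congr_deriv (by ring)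
    exact h2.congr_of_eventuallyEq he
  · rw [hasDerivAt_iff_tendsto_slope]
    have he : (slope (fun s : ℝ => s * |s|) 0) =ᶠ[nhdsWithin 0 {(0:ℝ)}ᶜ] (fun s => |s|) := by
      filter_upwards [self_mem_nhdsWithin] with s hs
      have hs' : s ≠ 0 := hs
      rw [slope_def_field]; simp only [abs_zero, mul_zero, sub_zero]
      exact mul_div_cancel_left₀ _ hs'
    rw [Filter.tendsto_congr' he]
    simpa using (continuous_abs.tendsto (0:ℝ)).mono_left nhdsWithin_le_nhds
  · have he : (fun s : ℝ => s * |s|) =ᶠ[nhds t] (fun s => s*s) := by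
      filter_upwards [eventually_gt_nhds ht] with s hs
      rw [abs_of_pos hs]
    have h2 : HasDerivAt (fun s : ℝ => s*s) (2 * |t|) t := by
      have := (hasDerivAt_id t).mul (hasDerivAt_id t)
      simp only [id_eq] at this
      rw [abs_of_pos ht]; exact this.congr_deriv (by ring)
    exact h2.congr_of_eventuallyEq he

lemma hasDerivAt_tphi (R : ℝ) (hR : 0 ≤ R) (t : ℝ) :
    HasDerivAt (tphi R) (tphi' R t) t := by
  have h1 : HasDerivAt (fun s : ℝ => (s - R) * |s - R|) (2 * |t - R|) t := by
    simpa [Function.comp_def] using (hasDerivAt_mul_abs (t - R)).comp t ((hasDerivAt_id t).sub_const R)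
  have h2 : HasDerivAt (fun s : ℝ => (s + R) * |s + R|) (2 * |t + R|) t := by
    simpa [Function.comp_def] using (hasDerivAt_mul_abs (t + R)).comp t ((hasDerivAt_id t).add_const R)
  have h3 : HasDerivAt (fun s : ℝ => 2*R*s) (2*R) t := by
    simpa using (hasDerivAt_id t).const_mul (2*R)
  have h := ((hasDerivAt_mul_abs t).add h3).sub (((h1.add h2).div_const 2))
  have heq : 2 * |t| + 2*R - (2 * |t - R| + 2 * |t + R|) / 2 = tphi' R t := by
    unfold tphi'
    rcases abs_cases (t - R) with ⟨e1, c1⟩ | ⟨e1, c1⟩ <;>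
      rcases abs_cases (t + R) with ⟨e2, c2⟩ | ⟨e2, c2⟩ <;>
      rcases abs_cases t with ⟨e3, c3⟩ | ⟨e3, c3⟩ <;>
      rcases min_cases |t| R with ⟨e4, c4⟩ | ⟨e4, c4⟩ <;>
      rw [e1, e2, e3] at * <;> rw [e4] <;> linarith
  rw [← heq]
  exact h.congr_deriv (by ring)

lemma tphi_neg (R t : ℝ) : tphi R (-t) = -(tphi R t) := by
  unfold tphi
  have e1 : -t - R = -(t + R) := by ring
  have e2 : -t + R = -(t - R) := by ring
  rw [e1, e2, abs_neg, abs_neg, abs_neg]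
  ring

lemma tphi'_neg (R t : ℝ) : tphi' R (-t) = tphi' R t := by
  unfold tphi'; rw [abs_neg]

lemma tphi_nonneg {R t : ℝ} (hR : 0 ≤ R) (ht : 0 ≤ t) : 0 ≤ tphi R t := by
  unfold tphi
  rw [abs_of_nonneg ht, abs_of_nonneg (by linarith : (0:ℝ) ≤ t + R)]
  rcases le_total t R with h | h
  · rw [abs_of_nonpos (by linarith)]; nlinarith
  · rw [abs_of_nonneg (by linarith)]; nlinarith

lemma tphi_le_sq {R t : ℝ} (hR : 0 ≤ R) (ht : 0 ≤ t) : tphi R t ≤ t^2 := by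
  unfold tphi
  rw [abs_of_nonneg ht, abs_of_nonneg (by linarith : (0:ℝ) ≤ t + R)]
  rcases le_total t R with h | h
  · rw [abs_of_nonpos (by linarith)]; nlinarith
  · rw [abs_of_nonneg (by linarith)]; nlinarith

lemma tphi'_sq_le {R t : ℝ} (hR : 0 ≤ R) (ht : 0 ≤ t) : (tphi' R t)^2 ≤ 4 * tphi R t := by
  unfold tphi tphi'
  rw [abs_of_nonneg ht, abs_of_nonneg (by linarith : (0:ℝ) ≤ t + R)]
  rcases le_total t R with h | h
  · rw [abs_of_nonpos (by linarith), min_eq_left h]; nlinarith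
  · rw [abs_of_nonneg (by linarith), min_eq_right h]; nlinarith

lemma tphi_pos {R t : ℝ} (hR : 0 < R) (ht : 0 < t) : 0 < tphi R t := by
  unfold tphi
  rw [abs_of_nonneg ht.le, abs_of_nonneg (by linarith : (0:ℝ) ≤ t + R)]
  rcases le_total t R with h | h
  · rw [abs_of_nonpos (by linarith)]; nlinarith
  · rw [abs_of_nonneg (by linarith)]; nlinarith

lemma tphi_eq {R t : ℝ} (h : |t| ≤ R) : tphi R t = t * |t| := by
  unfold tphi
  rcases abs_cases t with ⟨e, c⟩ | ⟨e, c⟩ <;> rw [e] at h ⊢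
  · rw [abs_of_nonpos (by linarith), abs_of_nonneg (by linarith)]; ring
  · rw [abs_of_nonpos (by linarith), abs_of_nonneg (by linarith)]; ring

lemma abs_tphi'_le {R t : ℝ} (hR : 0 ≤ R) : |tphi' R t| ≤ 2 * R := by
  unfold tphi'
  rw [abs_of_nonneg (by positivity : (0:ℝ) ≤ 2 * min |t| R)]
  have : min |t| R ≤ R := min_le_right _ _
  linarith

lemma tphi_nonpos {R t : ℝ} (hR : 0 ≤ R) (ht : t ≤ 0) : tphi R t ≤ 0 := by
  have := tphi_nonneg hR (by linarith : (0:ℝ) ≤ -t)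
  rw [tphi_neg] at this; linarith

lemma abs_tphi_le (R t : ℝ) (hR : 0 ≤ R) : |tphi R t| ≤ t^2 := by
  rcases le_total 0 t with ht | ht
  · rw [abs_of_nonneg (tphi_nonneg hR ht)]; exact tphi_le_sq hR ht
  · rw [abs_of_nonpos (tphi_nonpos hR ht)]
    have := tphi_le_sq hR (by linarith : (0:ℝ) ≤ -t)
    rw [tphi_neg] at this; nlinarith

lemma tphi'_sq_le_abs {R t : ℝ} (hR : 0 ≤ R) : (tphi' R t)^2 ≤ 4 * |tphi R t| := by
  rcases le_total 0 t with ht | ht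
  · rw [abs_of_nonneg (tphi_nonneg hR ht)]; exact tphi'_sq_le hR ht
  · rw [abs_of_nonpos (tphi_nonpos hR ht)]
    have := tphi'_sq_le hR (by linarith : (0:ℝ) ≤ -t)
    rw [tphi_neg, tphi'_neg] at this; linarith

/-- key pointwise AM-GM consequence -/
lemma tphi_amgm {R t a lam : ℝ} (hR : 0 ≤ R) (ha : 0 ≤ a) (hlam : 0 < lam) :
    |tphi' R t| * a ≤ lam * |tphi R t| + a^2 / lam := by
  have h1 : (tphi' R t)^2 ≤ 4 * |tphi R t| := tphi'_sq_le_abs hR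
  have h2 : (0:ℝ) ≤ (lam * |tphi' R t| / 2 - a)^2 := sq_nonneg _
  have h3 : |tphi' R t|^2 = (tphi' R t)^2 := sq_abs _
  have h4 : 0 ≤ |tphi' R t| := abs_nonneg _
  have hfs : lam * (a^2/lam) = a^2 := by field_simp
  have key : lam * (|tphi' R t| * a) ≤ lam * (lam * |tphi R t| + a^2/lam) := by
    rw [mul_add, hfs]
    nlinarith [mul_pos hlam hlam]
  exact le_of_mul_le_mul_left key hlam

lemma exists_median {α : Type*} [MeasurableSpace α] (μ : Measure α) [IsProbabilityMeasure μ]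
    {g : α → ℝ} (hg : Measurable g) :
    ∃ m : ℝ, μ {x | g x < m} ≤ 1/2 ∧ μ {x | m < g x} ≤ 1/2 := by
  have hms : ∀ c : ℝ, MeasurableSet {x | g x ≤ c} := fun c => hg measurableSet_Iic
  set S : Set ℝ := {t : ℝ | 1/2 ≤ μ {x | g x ≤ t}} with hS
  have hne : S.Nonempty := by
    have hmono : Monotone (fun n : ℕ => {x | g x ≤ (n:ℝ)}) := by
      intro a b hab x hx
      simp only [Set.mem_setOf_eq] at *
      exact le_trans hx (by exact_mod_cast hab)
    have hun : (⋃ n : ℕ, {x | g x ≤ (n:ℝ)}) = Set.univ := by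
      ext x; simp only [Set.mem_iUnion, Set.mem_univ, iff_true, Set.mem_setOf_eq]
      exact exists_nat_ge (g x)
    have ht := tendsto_measure_iUnion_atTop (μ := μ) hmono
    rw [hun, measure_univ] at ht
    have hev : ∀ᶠ n : ℕ in Filter.atTop, 1/2 ≤ μ {x | g x ≤ (n:ℝ)} :=
      ht.eventually (eventually_ge_nhds (ENNReal.half_lt_self one_ne_zero ENNReal.one_ne_top))
    rcases hev.exists with ⟨n, hn⟩
    exact ⟨(n:ℝ), hn⟩
  have hbdd : BddBelow S := by
    have hanti : Antitone (fun n : ℕ => {x | g x ≤ -(n:ℝ)}) := by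
      intro a b hab x hx
      simp only [Set.mem_setOf_eq] at *
      have : -(b:ℝ) ≤ -(a:ℝ) := by exact_mod_cast neg_le_neg (Nat.cast_le.mpr hab)
      linarith
    have hin : (⋂ n : ℕ, {x | g x ≤ -(n:ℝ)}) = ∅ := by
      ext x; simp only [Set.mem_iInter, Set.mem_empty_iff_false, iff_false, not_forall,
        Set.mem_setOf_eq, not_le]
      rcases exists_nat_gt (-(g x)) with ⟨n, hn⟩
      exact ⟨n, by linarith⟩
    have ht := tendsto_measure_iInter_atTop (μ := μ)
      (fun n : ℕ => ((hms (-(n:ℝ))).nullMeasurableSet)) hanti ⟨0, measure_ne_top μ _⟩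
    rw [hin, measure_empty] at ht
    have hev : ∀ᶠ n : ℕ in Filter.atTop, μ {x | g x ≤ -(n:ℝ)} < 1/2 := by
      refine ht.eventually (eventually_lt_nhds ?_)
      simp [ENNReal.div_pos_iff]
    rcases hev.exists with ⟨n, hn⟩
    refine ⟨-(n:ℝ), fun t htS => ?_⟩
    by_contra hlt
    push_neg at hlt
    have hmm : μ {x | g x ≤ t} ≤ μ {x | g x ≤ -(n:ℝ)} :=
      measure_mono (fun x hx => le_trans hx hlt.le)
    exact absurd (le_trans htS hmm) (not_le.mpr hn)
  set m := sInf S with hm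
  refine ⟨m, ?_, ?_⟩
  · have hun : {x | g x < m} = ⋃ n : ℕ, {x | g x ≤ m - 1/((n:ℝ)+1)} := by
      ext x
      simp only [Set.mem_iUnion, Set.mem_setOf_eq]
      constructor
      · intro hx
        rcases exists_nat_one_div_lt (by linarith : (0:ℝ) < m - g x) with ⟨n, hn⟩
        exact ⟨n, by linarith⟩
      · rintro ⟨n, hn⟩
        have : (0:ℝ) < 1/((n:ℝ)+1) := by positivity
        linarith
    have hmono : Monotone (fun n : ℕ => {x | g x ≤ m - 1/((n:ℝ)+1)}) := by
      intro a b hab x hx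
      have hba : 1/((b:ℝ)+1) ≤ 1/((a:ℝ)+1) := by
        apply one_div_le_one_div_of_le (by positivity)
        have : (a:ℝ) ≤ (b:ℝ) := by exact_mod_cast hab
        linarith
      simp only [Set.mem_setOf_eq] at *
      linarith
    have ht := tendsto_measure_iUnion_atTop (μ := μ) hmono
    rw [← hun] at ht
    refine le_of_tendsto' ht (fun n => ?_)
    have hnotin : m - 1/((n:ℝ)+1) ∉ S := by
      intro hcon
      have hcsle := csInf_le hbdd hcon
      have hpos : (0:ℝ) < 1/((n:ℝ)+1) := by positivity
      rw [← hm] at hcsle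
      linarith
    rw [hS, Set.mem_setOf_eq, not_le] at hnotin
    exact hnotin.le
  · have hle : 1/2 ≤ μ {x | g x ≤ m} := by
      have hin : {x | g x ≤ m} = ⋂ n : ℕ, {x | g x ≤ m + 1/((n:ℝ)+1)} := by
        ext x
        simp only [Set.mem_iInter, Set.mem_setOf_eq]
        constructor
        · intro hx n
          have : (0:ℝ) < 1/((n:ℝ)+1) := by positivity
          linarith
        · intro hx
          by_contra hcon
          push_neg at hcon
          rcases exists_nat_one_div_lt (by linarith : (0:ℝ) < g x - m) with ⟨n, hn⟩
          have := hx n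
          linarith
      have hanti : Antitone (fun n : ℕ => {x | g x ≤ m + 1/((n:ℝ)+1)}) := by
        intro a b hab x hx
        have hba : 1/((b:ℝ)+1) ≤ 1/((a:ℝ)+1) := by
          apply one_div_le_one_div_of_le (by positivity)
          have : (a:ℝ) ≤ (b:ℝ) := by exact_mod_cast hab
          linarith
        simp only [Set.mem_setOf_eq] at *
        linarith
      have ht := tendsto_measure_iInter_atTop (μ := μ)
        (fun n : ℕ => ((hms (m + 1/((n:ℝ)+1))).nullMeasurableSet)) hanti ⟨0, measure_ne_top μ _⟩
      rw [← hin] at ht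
      refine ge_of_tendsto' ht (fun n => ?_)
      have hlt : ∃ t ∈ S, t < m + 1/((n:ℝ)+1) := by
        apply (csInf_lt_iff hbdd hne).mp
        rw [← hm]
        have : (0:ℝ) < 1/((n:ℝ)+1) := by positivity
        linarith
      rcases hlt with ⟨t, htS, htlt⟩
      exact le_trans htS (measure_mono (fun x hx => le_trans hx htlt.le))
    have hcompl : {x | m < g x} = {x | g x ≤ m}ᶜ := by
      ext x; simp [not_le]
    have h2 : (1:ℝ≥0∞) - 1/2 = 1/2 := by
      have := ENNReal.sub_half (a := 1) ENNReal.one_ne_top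
      simpa using this
    rw [hcompl, measure_compl (hms m) (measure_ne_top μ _), measure_univ]
    calc (1:ℝ≥0∞) - μ {x | g x ≤ m} ≤ 1 - 1/2 := tsub_le_tsub_left hle 1
    _ = 1/2 := h2

set_option maxHeartbeats 1000000 in
/-- Cheeger's inequality (in its functional, `L¹`-Poincaré form) implies the Poincaré
inequality with constant `4ψ²`. -/
theorem cheeger_implies_poincare {n : ℕ}
    (μ : Measure (EuclideanSpace ℝ (Fin n))) [IsProbabilityMeasure μ]
    (ψ : ℝ) (hψ : 0 < ψ)
    (hCheeger : ∀ f : EuclideanSpace ℝ (Fin n) → ℝ,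
      (∃ L : NNReal, LipschitzWith L f) → Differentiable ℝ f →
      ∃ c : ℝ, ∫ x, |f x - c| ∂μ ≤ ψ * ∫ x, ‖gradient f x‖ ∂μ) :
    ∀ f : EuclideanSpace ℝ (Fin n) → ℝ,
      (∃ L : NNReal, LipschitzWith L f) → Differentiable ℝ f →
      (∫ x, f x ^ 2 ∂μ) - (∫ x, f x ∂μ) ^ 2
        ≤ 4 * ψ ^ 2 * ∫ x, ‖gradient f x‖ ^ 2 ∂μ := by
  intro f hLipEx hDiff
  classical
  obtain ⟨L, hL⟩ := hLipEx
  -- gradient of f : norm identity and bound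
  have hgrad_eq_fderiv : ∀ (g : EuclideanSpace ℝ (Fin n) → ℝ), Differentiable ℝ g → ∀ x,
      (InnerProductSpace.toDual ℝ (EuclideanSpace ℝ (Fin n))) (gradient g x) = fderiv ℝ g x := by
    intro g hg x
    exact (hg x).hasGradientAt.hasFDerivAt.unique (hg x).hasFDerivAt
  have hgradf_norm : ∀ x, ‖gradient f x‖ = ‖fderiv ℝ f x‖ := by
    intro x
    rw [← hgrad_eq_fderiv f hDiff x]
    exact (LinearIsometryEquiv.norm_map _ _).symm
  have hgradf_le : ∀ x, ‖gradient f x‖ ≤ L := by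
    intro x
    rw [hgradf_norm x]
    exact norm_fderiv_le_of_lipschitz ℝ hL
  have hgradf_meas : Measurable (fun x => gradient f x) := by
    exact ((InnerProductSpace.toDual ℝ (EuclideanSpace ℝ (Fin n))).symm.continuous.measurable).comp
      (measurable_fderiv ℝ f)
  have hG_int : Integrable (fun x => ‖gradient f x‖^2) μ := by
    refine Integrable.mono' (integrable_const ((L:ℝ)^2))
      ((hgradf_meas.norm.pow_const 2).aestronglyMeasurable) ?_
    refine Filter.Eventually.of_forall (fun x => ?_)
    have h1 := hgradf_le x
    have h2 : (0:ℝ) ≤ ‖gradient f x‖ := norm_nonneg _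
    rw [Real.norm_eq_abs, abs_of_nonneg (by positivity)]
    nlinarith
  have hG_nonneg : 0 ≤ ∫ x, ‖gradient f x‖^2 ∂μ :=
    integral_nonneg (fun x => by positivity)
  by_cases hf2 : Integrable (fun x => f x ^ 2) μ
  swap
  · rw [integral_undef hf2]
    nlinarith [sq_nonneg (∫ x, f x ∂μ), sq_nonneg ψ]
  -- main case
  have hf_cont : Continuous f := hL.continuous
  have hf_meas : Measurable f := hf_cont.measurable
  have hf_int : Integrable f μ := by
    refine Integrable.mono' ((integrable_const (1:ℝ)).add hf2)
      hf_meas.aestronglyMeasurable ?_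
    refine Filter.Eventually.of_forall (fun x => ?_)
    show ‖f x‖ ≤ 1 + f x ^ 2
    rw [Real.norm_eq_abs]
    nlinarith [sq_nonneg (|f x| - 1), sq_abs (f x)]
  obtain ⟨m, hm1, hm2⟩ := exists_median μ hf_meas
  set G := ∫ x, ‖gradient f x‖^2 ∂μ with hG
  have hfm2_int : Integrable (fun x => (f x - m)^2) μ := by
    have : (fun x => (f x - m)^2) = fun x => f x^2 - (2*m)*f x + m^2 := by
      funext x; ring
    rw [this]
    exact (hf2.sub (hf_int.const_mul (2*m))).add (integrable_const _)
  -- key bound for each truncation level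
  have key : ∀ k : ℕ, ∫ x, |tphi ((k:ℝ)+1) (f x - m)| ∂μ ≤ 4 * ψ^2 * G := by
    intro k
    set R : ℝ := (k:ℝ)+1 with hRdef
    have hR : (0:ℝ) < R := by positivity
    set h : EuclideanSpace ℝ (Fin n) → ℝ := fun x => tphi R (f x - m) with hh
    -- differentiability of tphi R and of h
    have hdtphi : ∀ t, HasDerivAt (tphi R) (tphi' R t) t := hasDerivAt_tphi R hR.le
    have htphi_diff : Differentiable ℝ (tphi R) := fun t => (hdtphi t).differentiableAt
    have hsub_diff : Differentiable ℝ (fun x : EuclideanSpace ℝ (Fin n) => f x - m) := fun x => (hDiff x).sub_const m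
    have hdiffh : Differentiable ℝ h := fun x =>
      (show DifferentiableAt ℝ ((tphi R) ∘ (fun x => f x - m)) x from
        (htphi_diff (f x - m)).comp x (hsub_diff x))
    -- Lipschitz constant for h
    have htphi_lip : LipschitzWith (2*((k:NNReal)+1)) (tphi R) := by
      refine lipschitzWith_of_nnnorm_deriv_le htphi_diff (fun t => ?_)
      rw [← NNReal.coe_le_coe, coe_nnnorm, (hdtphi t).deriv, Real.norm_eq_abs]
      have := abs_tphi'_le (t := t) hR.le
      have hcast : ((2*((k:NNReal)+1) : NNReal) : ℝ) = 2*R := by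
        push_cast [hRdef]; ring
      rw [hcast]
      exact this
    have hsub_lip : LipschitzWith L (fun x : EuclideanSpace ℝ (Fin n) => f x - m) := by
      intro x y
      rw [edist_sub_right]
      exact hL x y
    have hLiph : LipschitzWith (2*((k:NNReal)+1) * L) h := htphi_lip.comp hsub_lip
    -- gradient of h
    have hgradh : ∀ x, HasGradientAt h (tphi' R (f x - m) • gradient f x) x := by
      intro x
      have hinner : HasFDerivAt (fun y : EuclideanSpace ℝ (Fin n) => f y - m) (fderiv ℝ f x) x :=
        ((hDiff x).hasFDerivAt).sub_const m
      have hcomp := (hdtphi (f x - m)).comp_hasFDerivAt x hinner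
      have heqd : (InnerProductSpace.toDual ℝ (EuclideanSpace ℝ (Fin n))) (tphi' R (f x - m) • gradient f x)
          = tphi' R (f x - m) • fderiv ℝ f x := by
        rw [_root_.map_smul, hgrad_eq_fderiv f hDiff x]
      rw [hasGradientAt_iff_hasFDerivAt, heqd]
      exact hcomp
    have hgradh_eq : ∀ x, ‖gradient h x‖ = |tphi' R (f x - m)| * ‖gradient f x‖ := by
      intro x
      rw [(hgradh x).gradient, norm_smul, Real.norm_eq_abs]
    -- measurability / integrability
    have hh_cont : Continuous h := htphi_diff.continuous.comp (hf_cont.sub continuous_const)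
    have hh_meas : Measurable h := hh_cont.measurable
    have habs_h_int : Integrable (fun x => |h x|) μ := by
      refine Integrable.mono' hfm2_int (hh_meas.abs.aestronglyMeasurable) ?_
      refine Filter.Eventually.of_forall (fun x => ?_)
      rw [Real.norm_eq_abs, abs_abs]
      exact abs_tphi_le R (f x - m) hR.le
    have hh_int : Integrable h μ := by
      refine Integrable.mono' hfm2_int (hh_meas.aestronglyMeasurable) ?_
      exact Filter.Eventually.of_forall (fun x => abs_tphi_le R (f x - m) hR.le)
    have hgradh_meas : Measurable (fun x => ‖gradient h x‖) := by
      exact (((InnerProductSpace.toDual ℝ (EuclideanSpace ℝ (Fin n))).symm.continuous.measurable).comp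
        (measurable_fderiv ℝ h)).norm
    have hgradh_int : Integrable (fun x => ‖gradient h x‖) μ := by
      refine Integrable.mono' (integrable_const (2*R*(L:ℝ)))
        hgradh_meas.aestronglyMeasurable ?_
      refine Filter.Eventually.of_forall (fun x => ?_)
      rw [Real.norm_eq_abs, abs_of_nonneg (norm_nonneg _), hgradh_eq x]
      have h1 := abs_tphi'_le (t := f x - m) hR.le
      have h2 := hgradf_le x
      have h3 : (0:ℝ) ≤ |tphi' R (f x - m)| := abs_nonneg _
      nlinarith [norm_nonneg (gradient f x)]
    -- apply Cheeger to h
    obtain ⟨c, hc⟩ := hCheeger h ⟨_, hLiph⟩ hdiffh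
    have hhc_int : Integrable (fun x => |h x - c|) μ := (hh_int.sub (integrable_const c)).abs
    -- median step : ∫ |h| ≤ ∫ |h - c|
    have hmed : ∫ x, |h x| ∂μ ≤ ∫ x, |h x - c| ∂μ := by
      -- choose the "bad" set depending on the sign of c
      obtain ⟨B, hBmeas, hBle, hBpt⟩ :
          ∃ B : Set (EuclideanSpace ℝ (Fin n)), MeasurableSet B ∧ μ B ≤ 1/2 ∧
            ∀ x, (if x ∈ B then -|c| else |c|) ≤ |h x - c| - |h x| := by
        rcases le_or_gt 0 c with hc0 | hc0
        · refine ⟨{x | m < f x}, hf_meas measurableSet_Ioi, hm2, fun x => ?_⟩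
          by_cases hx : x ∈ {x | m < f x}
          · rw [if_pos hx]
            have hx' : m < f x := hx
            have hpos : 0 < h x := tphi_pos hR (by simpa using sub_pos.mpr hx')
            have := le_abs_self (h x - c)
            rw [abs_of_pos hpos, abs_of_nonneg hc0]
            linarith
          · rw [if_neg hx]
            have hxle : f x ≤ m := by simpa [not_lt] using hx
            have hneg : h x ≤ 0 := tphi_nonpos hR.le (by simpa using sub_nonpos.mpr hxle)
            rw [abs_of_nonpos hneg, abs_of_nonpos (by linarith : h x - c ≤ 0),
              abs_of_nonneg hc0]
            linarith
        · refine ⟨{x | f x < m}, hf_meas measurableSet_Iio, hm1, fun x => ?_⟩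
          by_cases hx : x ∈ {x | f x < m}
          · rw [if_pos hx]
            have hx' : f x < m := hx
            have hneg : h x ≤ 0 := tphi_nonpos hR.le (by simpa using sub_nonpos.mpr (le_of_lt hx'))
            have := neg_abs_le (h x - c)
            rw [abs_of_nonpos hneg, abs_of_neg hc0]
            linarith
          · rw [if_neg hx]
            have hxge : m ≤ f x := by simpa [not_lt] using hx
            have hpos : 0 ≤ h x := tphi_nonneg hR.le (by simpa using sub_nonneg.mpr hxge)
            rw [abs_of_nonneg hpos, abs_of_nonneg (by linarith : 0 ≤ h x - c),
              abs_of_neg hc0]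
            linarith
      -- integrate the pointwise bound
      set g0 : EuclideanSpace ℝ (Fin n) → ℝ := fun x => |c| - 2*|c| * Set.indicator B (fun _ => (1:ℝ)) x with hg0
      have hind_int : Integrable (fun x => Set.indicator B (fun _ => (1:ℝ)) x) μ := by
        rw [integrable_indicator_iff hBmeas]
        exact (integrable_const _).integrableOn
      have hg0_int : Integrable g0 μ := (integrable_const |c|).sub (hind_int.const_mul _)
      have hg0_le : ∀ x, g0 x ≤ |h x - c| - |h x| := by
        intro x
        have hpt := hBpt x
        show |c| - 2*|c| * Set.indicator B (fun _ => (1:ℝ)) x ≤ |h x - c| - |h x|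
        by_cases hx : x ∈ B
        · rw [if_pos hx] at hpt
          rw [Set.indicator_of_mem hx]
          linarith
        · rw [if_neg hx] at hpt
          rw [Set.indicator_of_notMem hx]
          linarith
      have hint_g0 : 0 ≤ ∫ x, g0 x ∂μ := by
        have hBtoReal : (μ B).toReal ≤ 1/2 := by
          have := ENNReal.toReal_mono (by norm_num : ((1:ENNReal)/2) ≠ ⊤) hBle
          simpa using this
        rw [hg0]
        rw [integral_sub (integrable_const _) (hind_int.const_mul _)]
        rw [integral_const_mul, integral_indicator_const _ hBmeas]
        simp only [integral_const, measure_univ, ENNReal.toReal_one, smul_eq_mul, one_smul,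
          one_mul, mul_one, probReal_univ, measureReal_def]
        nlinarith [abs_nonneg c, ENNReal.toReal_nonneg (a := μ B)]
      have hsub_int : Integrable (fun x => |h x - c| - |h x|) μ := hhc_int.sub habs_h_int
      have hmono := integral_mono hg0_int hsub_int hg0_le
      rw [integral_sub hhc_int habs_h_int] at hmono
      linarith
    -- AM-GM / chain rule step
    set lam : ℝ := 1/(2*ψ) with hlam
    have hlam_pos : 0 < lam := by positivity
    have hgrad_bound : ∫ x, ‖gradient h x‖ ∂μ
        ≤ lam * (∫ x, |h x| ∂μ) + (1/lam) * G := by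
      have hrhs_int : Integrable (fun x => lam * |h x| + (1/lam) * ‖gradient f x‖^2) μ :=
        (habs_h_int.const_mul lam).add (hG_int.const_mul (1/lam))
      have hpt : ∀ x, ‖gradient h x‖ ≤ lam * |h x| + (1/lam) * ‖gradient f x‖^2 := by
        intro x
        rw [hgradh_eq x]
        have := tphi_amgm (t := f x - m) (a := ‖gradient f x‖) hR.le (norm_nonneg _) hlam_pos
        have hdiv : ‖gradient f x‖^2 / lam = (1/lam) * ‖gradient f x‖^2 := by ring
        rw [hdiv] at this
        exact this
      have := integral_mono hgradh_int hrhs_int hpt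
      rwa [integral_add (habs_h_int.const_mul lam) (hG_int.const_mul (1/lam)),
        integral_const_mul, integral_const_mul] at this
    -- combine
    have hA_nonneg : 0 ≤ ∫ x, |h x| ∂μ := integral_nonneg (fun x => abs_nonneg _)
    have hchain : ∫ x, |h x| ∂μ ≤ ψ * (lam * (∫ x, |h x| ∂μ) + (1/lam) * G) := by
      calc ∫ x, |h x| ∂μ ≤ ∫ x, |h x - c| ∂μ := hmed
        _ ≤ ψ * ∫ x, ‖gradient h x‖ ∂μ := hc
        _ ≤ ψ * (lam * (∫ x, |h x| ∂μ) + (1/lam) * G) := by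
            exact mul_le_mul_of_nonneg_left hgrad_bound hψ.le
    have he1 : ψ * lam = 1/2 := by
      rw [hlam]; field_simp
    have he2 : ψ * (1/lam) = 2*ψ^2 := by
      rw [hlam]; field_simp
    have hexp : ψ * (lam * (∫ x, |h x| ∂μ) + (1/lam) * G)
        = (1/2) * (∫ x, |h x| ∂μ) + 2*ψ^2 * G := by
      have : ψ * (lam * (∫ x, |h x| ∂μ) + (1/lam) * G)
          = (ψ * lam) * (∫ x, |h x| ∂μ) + (ψ * (1/lam)) * G := by ring
      rw [this, he1, he2]
    rw [hexp] at hchain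
    linarith
  -- dominated convergence
  have hlim : Filter.Tendsto (fun k : ℕ => ∫ x, |tphi ((k:ℝ)+1) (f x - m)| ∂μ)
      Filter.atTop (nhds (∫ x, (f x - m)^2 ∂μ)) := by
    refine tendsto_integral_of_dominated_convergence (fun x => (f x - m)^2)
      (fun k => ?_) hfm2_int (fun k => ?_) ?_
    · have hdiffk : Differentiable ℝ (tphi ((k:ℝ)+1)) := fun t =>
        (hasDerivAt_tphi ((k:ℝ)+1) (by positivity) t).differentiableAt
      have : Continuous (fun x => |tphi ((k:ℝ)+1) (f x - m)|) :=
        (hdiffk.continuous.comp (hf_cont.sub continuous_const)).abs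
      exact this.measurable.aestronglyMeasurable
    · refine Filter.Eventually.of_forall (fun x => ?_)
      rw [Real.norm_eq_abs, abs_abs]
      exact abs_tphi_le _ _ (by positivity)
    · refine Filter.Eventually.of_forall (fun x => ?_)
      have hev : ∀ᶠ k : ℕ in Filter.atTop, |tphi ((k:ℝ)+1) (f x - m)| = (f x - m)^2 := by
        obtain ⟨N, hN⟩ := exists_nat_ge |f x - m|
        refine Filter.eventually_atTop.mpr ⟨N, fun k hk => ?_⟩
        have hle : |f x - m| ≤ (k:ℝ)+1 := by
          have : (N:ℝ) ≤ (k:ℝ) := by exact_mod_cast hk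
          linarith
        rw [tphi_eq hle, abs_mul, abs_abs, ← sq_abs]
        ring
      have hev' : (fun k : ℕ => |tphi ((k:ℝ)+1) (f x - m)|)
          =ᶠ[Filter.atTop] (fun _ => (f x - m)^2) := hev
      exact Filter.Tendsto.congr' hev'.symm tendsto_const_nhds
  have hfin : ∫ x, (f x - m)^2 ∂μ ≤ 4*ψ^2*G := le_of_tendsto' hlim key
  -- conclude
  have hexpand : ∫ x, (f x - m)^2 ∂μ
      = (∫ x, f x^2 ∂μ) - 2*m*(∫ x, f x ∂μ) + m^2 := by
    have heq : (fun x => (f x - m)^2) = fun x => (f x^2 - (2*m)*f x) + m^2 := by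
      funext x; ring
    have hint1 : Integrable (fun x => f x^2 - (2*m)*f x) μ := hf2.sub (hf_int.const_mul (2*m))
    have hint2 : Integrable (fun x => (2*m)*f x) μ := hf_int.const_mul (2*m)
    rw [heq, integral_add hint1 (integrable_const _),
      integral_sub hf2 hint2, integral_const_mul, integral_const]
    simp [measure_univ]
  rw [hexpand] at hfin
  nlinarith [sq_nonneg ((∫ x, f x ∂μ) - m)]
end
end

section
/- Let X be a centered (mean zero) random vector in ℝⁿ with finite third moments which satisfies the Poincaré inequality with constant κ (i.e. Var(g(X)) ≤ κ·E|∇g(X)|² for every locally Lipschitz g). For i = 1,…,n let H_i be the symmetric matrix H_i = E[X_i · X⊗X] (entries E[X_i X_j X_k]). Then ‖Σ_{i=1}^n H_i²‖_op ≤ 4κ · ‖Cov(X)‖_op². -/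
open MeasureTheory

noncomputable section

/-- The covariance matrix of a measure `μ` on `ℝⁿ`. -/
def covMatrix {n : ℕ} (μ : Measure (EuclideanSpace ℝ (Fin n))) : Matrix (Fin n) (Fin n) ℝ :=
  Matrix.of fun i j => (∫ x, x i * x j ∂μ) - (∫ x, x i ∂μ) * (∫ x, x j ∂μ)

/-- The operator norm of the covariance matrix of `μ`. -/
def covOpNorm {n : ℕ} (μ : Measure (EuclideanSpace ℝ (Fin n))) : ℝ :=
  ‖Matrix.toEuclideanCLM (𝕜 := ℝ) (covMatrix μ)‖

open Filter Topology InnerProductSpace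

namespace SqT

section coords
variable {n : ℕ}

lemma abs_coord_le (x : EuclideanSpace ℝ (Fin n)) (i : Fin n) : |x i| ≤ ‖x‖ := by
  have h := EuclideanSpace.norm_eq x
  rw [h]
  have h1 : |x i| = Real.sqrt (‖x i‖ ^ 2) := by
    rw [Real.sqrt_sq_eq_abs]; simp
  rw [h1]
  apply Real.sqrt_le_sqrt
  exact Finset.single_le_sum (f := fun j => ‖x j‖ ^ 2) (fun j _ => by positivity) (Finset.mem_univ i)

lemma norm_sq_eq (x : EuclideanSpace ℝ (Fin n)) : ‖x‖ ^ 2 = ∑ i, (x i) ^ 2 := by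
  rw [EuclideanSpace.norm_eq, Real.sq_sqrt (by positivity)]
  simp [sq_abs]


variable {μ : Measure (EuclideanSpace ℝ (Fin n))} [IsProbabilityMeasure μ]

lemma cont_coord (i : Fin n) : Continuous fun x : EuclideanSpace ℝ (Fin n) => x i :=
  (EuclideanSpace.proj i).continuous

lemma integrable_of_cube (hmom : Integrable (fun x => ‖x‖ ^ 3) μ)
    {f : EuclideanSpace ℝ (Fin n) → ℝ} (hf : Continuous f)
    (h : ∀ x, |f x| ≤ 1 + ‖x‖ ^ 3) : Integrable f μ := by
  refine Integrable.mono' ((integrable_const (1:ℝ)).add hmom) hf.aestronglyMeasurable ?_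
  exact ae_of_all _ fun x => by simpa using h x

lemma pow_le_cube (x : EuclideanSpace ℝ (Fin n)) {k : ℕ} (hk : k ≤ 3) :
    ‖x‖ ^ k ≤ 1 + ‖x‖ ^ 3 := by
  rcases le_or_gt ‖x‖ 1 with h | h
  · have : ‖x‖ ^ k ≤ 1 := pow_le_one₀ (norm_nonneg x) h
    nlinarith [pow_nonneg (norm_nonneg x) 3]
  · have h1 : (1:ℝ) ≤ ‖x‖ := h.le
    have : ‖x‖ ^ k ≤ ‖x‖ ^ 3 := pow_le_pow_right₀ h1 hk
    nlinarith

lemma integrable_m1 (hmom : Integrable (fun x => ‖x‖ ^ 3) μ) (i : Fin n) :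
    Integrable (fun x : EuclideanSpace ℝ (Fin n) => x i) μ := by
  refine integrable_of_cube hmom (cont_coord i) fun x => ?_
  calc |x i| ≤ ‖x‖ := abs_coord_le x i
    _ = ‖x‖ ^ 1 := (pow_one _).symm
    _ ≤ 1 + ‖x‖ ^ 3 := pow_le_cube x (by norm_num)

lemma integrable_m2 (hmom : Integrable (fun x => ‖x‖ ^ 3) μ) (i j : Fin n) :
    Integrable (fun x : EuclideanSpace ℝ (Fin n) => x i * x j) μ := by
  refine integrable_of_cube hmom ((cont_coord i).mul (cont_coord j)) fun x => ?_
  calc |x i * x j| = |x i| * |x j| := abs_mul _ _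
    _ ≤ ‖x‖ * ‖x‖ := mul_le_mul (abs_coord_le x i) (abs_coord_le x j) (abs_nonneg _) (norm_nonneg x)
    _ = ‖x‖ ^ 2 := (sq ‖x‖).symm
    _ ≤ 1 + ‖x‖ ^ 3 := pow_le_cube x (by norm_num)

lemma integrable_m3 (hmom : Integrable (fun x => ‖x‖ ^ 3) μ) (i j k : Fin n) :
    Integrable (fun x : EuclideanSpace ℝ (Fin n) => x i * (x j * x k)) μ := by
  refine integrable_of_cube hmom ((cont_coord i).mul ((cont_coord j).mul (cont_coord k)))
    fun x => ?_
  have hi := abs_coord_le x i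
  have hj := abs_coord_le x j
  have hk := abs_coord_le x k
  have h0 : (0:ℝ) ≤ ‖x‖ := norm_nonneg x
  calc |x i * (x j * x k)| = |x i| * (|x j| * |x k|) := by rw [abs_mul, abs_mul]
    _ ≤ ‖x‖ * (‖x‖ * ‖x‖) := by
        apply mul_le_mul hi _ (by positivity) h0
        exact mul_le_mul hj hk (abs_nonneg _) h0
    _ = ‖x‖ ^ 3 := by ring
    _ ≤ 1 + ‖x‖ ^ 3 := by nlinarith [pow_nonneg h0 3]


end coords

section grad

variable {F : Type*} [NormedAddCommGroup F] [InnerProductSpace ℝ F] [CompleteSpace F]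

local notation "⟪" x ", " y "⟫" => @inner ℝ _ _ x y

lemma hasGradientAt_inner_const (v x : F) : HasGradientAt (fun y => ⟪v, y⟫) v x := by
  rw [hasGradientAt_iff_hasFDerivAt]
  have h : (toDual ℝ F v : F →L[ℝ] ℝ) = innerSL ℝ v := by
    ext y; simp [toDual_apply_apply]
  rw [h]
  exact (innerSL ℝ v).hasFDerivAt

lemma hasGradientAt_quad (A : F →L[ℝ] F) (hsym : ∀ y z, ⟪A y, z⟫ = ⟪y, A z⟫) (x : F) :
    HasGradientAt (fun y => ⟪y, A y⟫) ((2:ℝ) • A x) x := by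
  rw [hasGradientAt_iff_hasFDerivAt]
  have hf : HasFDerivAt (fun y : F => y) (ContinuousLinearMap.id ℝ F) x := hasFDerivAt_id x
  have hg : HasFDerivAt (fun y : F => A y) A x := A.hasFDerivAt
  have h := hf.inner ℝ hg
  have heq : ((fderivInnerCLM ℝ (x, A x)).comp
      ((ContinuousLinearMap.id ℝ F).prod A)) = (toDual ℝ F ((2:ℝ) • A x) : F →L[ℝ] ℝ) := by
    ext y
    simp only [ContinuousLinearMap.comp_apply, ContinuousLinearMap.prod_apply,
      ContinuousLinearMap.id_apply, fderivInnerCLM_apply, toDual_apply_apply]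
    rw [real_inner_smul_left]
    have h1 : ⟪x, A y⟫ = ⟪A x, y⟫ := (hsym x y).symm
    rw [h1, real_inner_comm y (A x)]
    ring
  rw [← heq]
  exact h

lemma gradient_eq_zero_of_fderiv_eq_zero {g : F → ℝ} {x : F} (h : fderiv ℝ g x = 0) :
    gradient g x = 0 := by
  rw [gradient, h, map_zero]

lemma gradient_clamp_le {q : F → ℝ} {w : F → F} (hq : ∀ x, HasGradientAt q (w x) x)
    (hqc : Continuous q) (R : ℝ) (hR : 0 ≤ R) (x : F) :
    ‖gradient (fun y => max (-R) (min (q y) R)) x‖ ≤ ‖w x‖ := by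
  set g : F → ℝ := fun y => max (-R) (min (q y) R) with hg
  rcases lt_or_ge (|q x|) R with hlt | hge
  · -- g = q near x
    have habs := abs_lt.1 hlt
    have hopen : IsOpen (q ⁻¹' Set.Ioo (-R) R) := (isOpen_Ioo).preimage hqc
    have hmem : x ∈ q ⁻¹' Set.Ioo (-R) R := ⟨habs.1, habs.2⟩
    have hev : g =ᶠ[nhds x] q := by
      filter_upwards [hopen.mem_nhds hmem] with y hy
      have h1 : min (q y) R = q y := min_eq_left hy.2.le
      have h2 : max (-R) (q y) = q y := max_eq_right hy.1.le
      simp [hg, h1, h2]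
    rw [hev.gradient_eq, (hq x).gradient]
  · -- gradient of g is 0 at x
    have h0 : gradient g x = 0 := by
      rcases le_abs'.1 hge with hle | hle
      · -- q x ≤ -R : global min
        have hgx : g x = -R := by
          have h1 : min (q x) R = q x := min_eq_left (hle.trans (neg_le_self hR))
          simp [hg, h1, max_eq_left hle]
        have hmin : IsLocalMin g x := by
          apply Filter.Eventually.of_forall
          intro y
          rw [hgx]
          exact le_max_left _ _
        by_cases hd : DifferentiableAt ℝ g x
        · exact gradient_eq_zero_of_fderiv_eq_zero hmin.fderiv_eq_zero
        · exact gradient_eq_zero_of_not_differentiableAt hd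
      · -- R ≤ q x : global max
        have hgx : g x = R := by
          have h1 : min (q x) R = R := min_eq_right hle
          simp [hg, h1, max_eq_right (neg_le_self hR)]
        have hmax : IsLocalMax g x := by
          apply Filter.Eventually.of_forall
          intro y
          rw [hgx]
          exact max_le (neg_le_self hR) (min_le_right _ _)
        by_cases hd : DifferentiableAt ℝ g x
        · exact gradient_eq_zero_of_fderiv_eq_zero hmax.fderiv_eq_zero
        · exact gradient_eq_zero_of_not_differentiableAt hd
    rw [h0]
    simp


end grad

section main
variable {n : ℕ}

lemma toEuclideanCLM_apply_coord (A : Matrix (Fin n) (Fin n) ℝ) (x : EuclideanSpace ℝ (Fin n))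
    (j : Fin n) : (Matrix.toEuclideanCLM (𝕜 := ℝ) A x) j = ∑ k, A j k * x k := by
  have h := congrFun (Matrix.ofLp_toEuclideanCLM (𝕜 := ℝ) A x) j
  simpa [Matrix.mulVec, dotProduct] using h

lemma inner_coord (w y : EuclideanSpace ℝ (Fin n)) :
    (inner ℝ w y : ℝ) = ∑ k, w k * y k := by
  simp [PiLp.inner_apply, RCLike.inner_apply, conj_trivial, mul_comm]

lemma cov_quad (μ : Measure (EuclideanSpace ℝ (Fin n)))
    (hcentered : ∀ i, (∫ x, x i ∂μ) = 0) (w : EuclideanSpace ℝ (Fin n)) :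
    ∑ k, ∑ l, w k * w l * (∫ x, x k * x l ∂μ) ≤ covOpNorm μ * ∑ k, (w k) ^ 2 := by
  set y := Matrix.toEuclideanCLM (𝕜 := ℝ) (covMatrix μ) w with hy
  have hC : ∀ k l : Fin n, covMatrix μ k l = ∫ x, x k * x l ∂μ := by
    intro k l; simp [covMatrix, hcentered]
  have hql : ∑ k, ∑ l, w k * w l * (∫ x, x k * x l ∂μ) = (inner ℝ w y : ℝ) := by
    rw [inner_coord]
    refine Finset.sum_congr rfl fun k _ => ?_
    rw [hy, toEuclideanCLM_apply_coord, Finset.mul_sum]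
    refine Finset.sum_congr rfl fun l _ => ?_
    rw [hC]; ring
  rw [hql]
  have h1 : (inner ℝ w y : ℝ) ≤ ‖w‖ * ‖y‖ := real_inner_le_norm w y
  have h2 : ‖y‖ ≤ covOpNorm μ * ‖w‖ :=
    (Matrix.toEuclideanCLM (𝕜 := ℝ) (covMatrix μ)).le_opNorm w
  have h3 : ∑ k, (w k) ^ 2 = ‖w‖ ^ 2 := by
    rw [EuclideanSpace.norm_eq, Real.sq_sqrt (by positivity)]
    simp [sq_abs]
  rw [h3]
  nlinarith [norm_nonneg w, norm_nonneg y]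


lemma core (μ : Measure (EuclideanSpace ℝ (Fin n))) [IsProbabilityMeasure μ]
    (hmom : Integrable (fun x => ‖x‖ ^ 3) μ)
    (hcentered : ∀ i, (∫ x, x i ∂μ) = 0)
    (κ : ℝ) (hκ : 0 ≤ κ)
    (hPoincare : ∀ g : EuclideanSpace ℝ (Fin n) → ℝ, LocallyLipschitz g → MemLp g 2 μ →
      (∫ x, g x ^ 2 ∂μ) - (∫ x, g x ∂μ) ^ 2 ≤ κ * ∫ x, ‖gradient g x‖ ^ 2 ∂μ)
    (v : EuclideanSpace ℝ (Fin n)) (B : Fin n → Fin n → ℝ)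
    (hBdef : ∀ i j, B i j = ∑ k, (∫ x, x i * (x j * x k) ∂μ) * v k) :
    ∑ i, ∑ l, (B i l) ^ 2 ≤ 4 * κ * covOpNorm μ ^ 2 * ‖v‖ ^ 2 := by
  classical
  rcases eq_or_ne v 0 with hv0 | hvne
  · have hB0 : ∀ i l, B i l = 0 := by
      intro i l; rw [hBdef]; simp [hv0]
    have : ∑ i, ∑ l : Fin n, (B i l) ^ 2 = 0 := by
      refine Finset.sum_eq_zero fun i _ => Finset.sum_eq_zero fun l _ => by rw [hB0]; ring
    rw [this]
    have : (0:ℝ) ≤ covOpNorm μ := norm_nonneg _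
    positivity
  set S := ∑ i, ∑ l, (B i l) ^ 2 with hSdef
  set Sig := covOpNorm μ with hSig
  have hS0 : 0 ≤ S := by positivity
  have hSig0 : 0 ≤ Sig := norm_nonneg _
  -- symmetry of B
  have hTsym : ∀ i j k : Fin n, (∫ x, x i * (x j * x k) ∂μ) = ∫ x, x j * (x i * x k) ∂μ := by
    intro i j k
    congr 1; funext x; ring
  have hBsym : ∀ i j, B i j = B j i := by
    intro i j; rw [hBdef, hBdef]
    exact Finset.sum_congr rfl fun k _ => by rw [hTsym]
  -- the CLM A
  set A := Matrix.toEuclideanCLM (𝕜 := ℝ) (Matrix.of B) with hA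
  have hAco : ∀ (x : EuclideanSpace ℝ (Fin n)) (j : Fin n), (A x) j = ∑ k, B j k * x k := by
    intro x j; rw [hA, toEuclideanCLM_apply_coord]; rfl
  have hsymA : ∀ y z : EuclideanSpace ℝ (Fin n), (inner ℝ (A y) z : ℝ) = inner ℝ y (A z) := by
    intro y z
    rw [inner_coord, inner_coord]
    calc ∑ k, (A y) k * z k = ∑ k, ∑ j, B k j * (y j * z k) := by
          refine Finset.sum_congr rfl fun k _ => ?_
          rw [hAco, Finset.sum_mul]
          exact Finset.sum_congr rfl fun j _ => by ring
      _ = ∑ j, ∑ k, B k j * (y j * z k) := Finset.sum_comm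
      _ = ∑ j, y j * (A z) j := by
          refine Finset.sum_congr rfl fun j _ => ?_
          rw [hAco, Finset.mul_sum]
          exact Finset.sum_congr rfl fun k _ => by rw [hBsym k j]; ring
  -- q and ℓ
  set q : EuclideanSpace ℝ (Fin n) → ℝ := fun x => (inner ℝ x (A x) : ℝ) with hqdef
  set l : EuclideanSpace ℝ (Fin n) → ℝ := fun x => (inner ℝ v x : ℝ) with hldef
  have hqcoord : ∀ x, q x = ∑ i, ∑ j, B i j * (x i * x j) := by
    intro x
    rw [hqdef]
    simp only
    rw [inner_coord]
    refine Finset.sum_congr rfl fun i _ => ?_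
    rw [hAco, Finset.mul_sum]
    exact Finset.sum_congr rfl fun j _ => by ring
  have hlcoord : ∀ x, l x = ∑ k, v k * x k := fun x => inner_coord v x
  have hqC : ContDiff ℝ 1 q := contDiff_id.inner ℝ A.contDiff
  have hqc : Continuous q := hqC.continuous
  have hlc : Continuous l := continuous_const.inner continuous_id
  have hqgrad : ∀ x, HasGradientAt q ((2:ℝ) • A x) x := hasGradientAt_quad A hsymA
  -- integrability
  have Iq : Integrable q μ := by
    rw [funext hqcoord]
    exact integrable_finset_sum _ fun i _ => integrable_finset_sum _ fun j _ =>
      (integrable_m2 hmom i j).const_mul _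
  have Il : Integrable l μ := by
    rw [funext hlcoord]
    exact integrable_finset_sum _ fun k _ => (integrable_m1 hmom k).const_mul _
  have hintl : ∫ x, l x ∂μ = 0 := by
    rw [funext hlcoord,
      integral_finset_sum _ fun k _ => (integrable_m1 hmom k).const_mul _]
    simp only [integral_const_mul]
    simp [hcentered]
  have hl2exp : (fun x => l x ^ 2)
      = fun x : EuclideanSpace ℝ (Fin n) => ∑ k, ∑ j, (v k * v j) * (x k * x j) := by
    funext x
    rw [hlcoord, sq, Finset.sum_mul_sum]
    exact Finset.sum_congr rfl fun k _ => Finset.sum_congr rfl fun j _ => by ring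
  have Il2 : Integrable (fun x => l x ^ 2) μ := by
    rw [hl2exp]
    exact integrable_finset_sum _ fun k _ => integrable_finset_sum _ fun j _ =>
      (integrable_m2 hmom k j).const_mul _
  have hVl : ∫ x, l x ^ 2 ∂μ ≤ Sig * ‖v‖ ^ 2 := by
    rw [hl2exp, integral_finset_sum _ fun k _ => integrable_finset_sum _ fun j _ =>
      (integrable_m2 hmom k j).const_mul _]
    have h1 : ∀ k ∈ Finset.univ, ∫ x, (∑ j, (v k * v j) * (x k * x j)) ∂μ
        = ∑ j, v k * v j * ∫ x, x k * x j ∂μ := by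
      intro k _
      rw [integral_finset_sum _ fun j _ => (integrable_m2 hmom k j).const_mul _]
      exact Finset.sum_congr rfl fun j _ => integral_const_mul _ _
    rw [Finset.sum_congr rfl h1]
    have := cov_quad μ hcentered v
    rw [norm_sq_eq]
    exact this
  -- ∫ q * l = S
  have hqlexp : (fun x => q x * l x) = fun x : EuclideanSpace ℝ (Fin n) =>
      ∑ i, ∑ j, ∑ k, (B i j * v k) * (x i * (x j * x k)) := by
    funext x
    rw [hqcoord, hlcoord, Finset.sum_mul]
    refine Finset.sum_congr rfl fun i _ => ?_
    rw [Finset.sum_mul]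
    refine Finset.sum_congr rfl fun j _ => ?_
    rw [Finset.mul_sum]
    exact Finset.sum_congr rfl fun k _ => by ring
  have Iql : Integrable (fun x => q x * l x) μ := by
    rw [hqlexp]
    exact integrable_finset_sum _ fun i _ => integrable_finset_sum _ fun j _ =>
      integrable_finset_sum _ fun k _ => (integrable_m3 hmom i j k).const_mul _
  have hintql : ∫ x, q x * l x ∂μ = S := by
    rw [hqlexp, integral_finset_sum _ fun i _ => integrable_finset_sum _ fun j _ =>
      integrable_finset_sum _ fun k _ => (integrable_m3 hmom i j k).const_mul _]
    rw [hSdef]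
    refine Finset.sum_congr rfl fun i _ => ?_
    rw [integral_finset_sum _ fun j _ =>
      integrable_finset_sum _ fun k _ => (integrable_m3 hmom i j k).const_mul _]
    refine Finset.sum_congr rfl fun j _ => ?_
    rw [integral_finset_sum _ fun k _ => (integrable_m3 hmom i j k).const_mul _]
    have : ∀ k ∈ Finset.univ, ∫ x, (B i j * v k) * (x i * (x j * x k)) ∂μ
        = B i j * ((∫ x, x i * (x j * x k) ∂μ) * v k) := by
      intro k _
      rw [integral_const_mul]
      ring
    rw [Finset.sum_congr rfl this, ← Finset.mul_sum, ← hBdef, sq]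

  -- truncations
  set gm : ℕ → EuclideanSpace ℝ (Fin n) → ℝ :=
    fun m x => max (-(m:ℝ)) (min (q x) (m:ℝ)) with hgm
  have hgmLip : ∀ m : ℕ, LocallyLipschitz (gm m) := fun m =>
    (hqC.locallyLipschitz.min_const _).const_max _
  have hgmc : ∀ m : ℕ, Continuous (gm m) := fun m =>
    continuous_const.max (hqc.min continuous_const)
  have hgmbd : ∀ (m : ℕ) x, |gm m x| ≤ (m:ℝ) := by
    intro m x
    rw [abs_le]
    refine ⟨le_max_left _ _, max_le ?_ (min_le_right _ _)⟩
    have : (0:ℝ) ≤ (m:ℝ) := Nat.cast_nonneg m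
    linarith
  have hgmq : ∀ (m : ℕ) x, |gm m x| ≤ |q x| := by
    intro m x
    rw [abs_le]
    constructor
    · have h1 : -|q x| ≤ min (q x) (m:ℝ) :=
        le_min (neg_abs_le _) ((neg_nonpos.mpr (abs_nonneg _)).trans (Nat.cast_nonneg m))
      exact h1.trans (le_max_right _ _)
    · exact max_le ((neg_nonpos.mpr (Nat.cast_nonneg m)).trans (abs_nonneg _))
        ((min_le_left _ _).trans (le_abs_self _))
  have hgmMem : ∀ m : ℕ, MemLp (gm m) 2 μ := fun m =>
    MemLp.of_bound (hgmc m).aestronglyMeasurable (m:ℝ)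
      (ae_of_all _ fun x => by simpa [Real.norm_eq_abs] using hgmbd m x)
  have Igm : ∀ m : ℕ, Integrable (gm m) μ := fun m =>
    Integrable.mono' (integrable_const ((m:ℝ))) (hgmc m).aestronglyMeasurable
      (ae_of_all _ fun x => by simpa [Real.norm_eq_abs] using hgmbd m x)
  have Igm2 : ∀ m : ℕ, Integrable (fun x => gm m x ^ 2) μ := fun m =>
    Integrable.mono' (integrable_const ((m:ℝ) ^ 2)) ((hgmc m).pow 2).aestronglyMeasurable
      (ae_of_all _ fun x => by
        rw [Real.norm_eq_abs, abs_pow]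
        exact pow_le_pow_left₀ (abs_nonneg _) (hgmbd m x) 2)
  have Igml : ∀ m : ℕ, Integrable (fun x => gm m x * l x) μ := fun m =>
    Integrable.mono' ((Il.abs).const_mul (m:ℝ)) ((hgmc m).mul hlc).aestronglyMeasurable
      (ae_of_all _ fun x => by
        rw [Real.norm_eq_abs, abs_mul]
        exact mul_le_mul_of_nonneg_right (hgmbd m x) (abs_nonneg _))
  -- gradient bound
  have hgb : ∀ m : ℕ, ∫ x, ‖gradient (gm m) x‖ ^ 2 ∂μ ≤ 4 * Sig * S := by
    intro m
    set Phi : EuclideanSpace ℝ (Fin n) → ℝ :=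
      fun x => ∑ i, ∑ k, ∑ j, (4 * (B i k * B i j)) * (x k * x j) with hPhi
    have hPhieq : ∀ x, ‖(2:ℝ) • A x‖ ^ 2 = Phi x := by
      intro x
      have h4 : ‖(2:ℝ) • A x‖ ^ 2 = 4 * ∑ i, (A x i) ^ 2 := by
        rw [norm_smul, mul_pow, norm_sq_eq]
        norm_num
      rw [h4, hPhi]
      simp only
      rw [Finset.mul_sum]
      refine Finset.sum_congr rfl fun i _ => ?_
      rw [hAco, pow_two, Finset.sum_mul_sum, Finset.mul_sum]
      refine Finset.sum_congr rfl fun k _ => ?_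
      rw [Finset.mul_sum]
      exact Finset.sum_congr rfl fun j _ => by ring
    have IPhi : Integrable Phi μ := by
      rw [hPhi]
      exact integrable_finset_sum _ fun i _ => integrable_finset_sum _ fun k _ =>
        integrable_finset_sum _ fun j _ => (integrable_m2 hmom k j).const_mul _
    have hmono : ∫ x, ‖gradient (gm m) x‖ ^ 2 ∂μ ≤ ∫ x, Phi x ∂μ := by
      refine integral_mono_of_nonneg (ae_of_all _ fun x => by positivity) IPhi
        (ae_of_all _ fun x => ?_)
      rw [← hPhieq x]
      have h := gradient_clamp_le hqgrad hqc (m:ℝ) (Nat.cast_nonneg m) x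
      have h' : ‖gradient (gm m) x‖ ≤ ‖(2:ℝ) • A x‖ := h
      exact pow_le_pow_left₀ (norm_nonneg _) h' 2
    have hPhiInt : ∫ x, Phi x ∂μ ≤ 4 * Sig * S := by
      rw [hPhi]
      rw [integral_finset_sum _ fun i _ => integrable_finset_sum _ fun k _ =>
        integrable_finset_sum _ fun j _ => (integrable_m2 hmom k j).const_mul _]
      have hper : ∀ i ∈ Finset.univ, (∫ x, ∑ k, ∑ j, (4 * (B i k * B i j)) * (x k * x j) ∂μ)
          ≤ 4 * (Sig * ∑ k, (B i k) ^ 2) := by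
        intro i _
        rw [integral_finset_sum _ fun k _ => integrable_finset_sum _ fun j _ =>
          (integrable_m2 hmom k j).const_mul _]
        have hpush : ∀ k ∈ Finset.univ,
            (∫ x, ∑ j, (4 * (B i k * B i j)) * (x k * x j) ∂μ)
            = ∑ j, (4 * (B i k * B i j)) * ∫ x, x k * x j ∂μ := by
          intro k _
          rw [integral_finset_sum _ fun j _ => (integrable_m2 hmom k j).const_mul _]
          exact Finset.sum_congr rfl fun j _ => integral_const_mul _ _
        rw [Finset.sum_congr rfl hpush]
        set we : EuclideanSpace ℝ (Fin n) := (WithLp.equiv 2 (Fin n → ℝ)).symm (fun k => B i k)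
          with hwe
        have hwk : ∀ k, we k = B i k := fun _ => rfl
        have hrw : ∑ k, ∑ j, (4 * (B i k * B i j)) * ∫ x, x k * x j ∂μ
            = 4 * ∑ k, ∑ j, we k * we j * ∫ x, x k * x j ∂μ := by
          rw [Finset.mul_sum]
          refine Finset.sum_congr rfl fun k _ => ?_
          rw [Finset.mul_sum]
          refine Finset.sum_congr rfl fun j _ => ?_
          rw [hwk, hwk]
          ring
        rw [hrw]
        have hq2 := cov_quad μ hcentered we
        have hsq : ∑ k, (we k) ^ 2 = ∑ k, (B i k) ^ 2 :=
          Finset.sum_congr rfl fun k _ => by rw [hwk]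
        rw [hsq] at hq2
        linarith
      calc (∑ i, ∫ x, ∑ k, ∑ j, (4 * (B i k * B i j)) * (x k * x j) ∂μ)
          ≤ ∑ i, 4 * (Sig * ∑ k, (B i k) ^ 2) := Finset.sum_le_sum hper
        _ = 4 * Sig * S := by
            rw [hSdef, Finset.mul_sum]
            exact Finset.sum_congr rfl fun i _ => by ring
    exact hmono.trans hPhiInt
  -- key inequality for each m, t
  have hkey : ∀ (m : ℕ) (t : ℝ), 2 * t * (∫ x, gm m x * l x ∂μ)
      ≤ κ * (4 * Sig * S) + t ^ 2 * (Sig * ‖v‖ ^ 2) := by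
    intro m t
    have hPm : (∫ x, gm m x ^ 2 ∂μ) - (∫ x, gm m x ∂μ) ^ 2 ≤ κ * (4 * Sig * S) :=
      (hPoincare (gm m) (hgmLip m) (hgmMem m)).trans
        (mul_le_mul_of_nonneg_left (hgb m) hκ)
    set Em := ∫ x, gm m x ∂μ with hEm
    have h1 : (fun x => (gm m x - Em - t * l x) ^ 2) = fun x =>
        (gm m x ^ 2 + (-(2 * Em)) * gm m x) + ((-(2 * t)) * (gm m x * l x)
          + ((2 * t * Em) * l x + (t ^ 2 * l x ^ 2 + Em ^ 2))) := funext fun x => by ring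
    have I2 : Integrable (fun x => t ^ 2 * l x ^ 2 + Em ^ 2) μ :=
      (Il2.const_mul _).add (integrable_const _)
    have I3 : Integrable (fun x => 2 * t * Em * l x + (t ^ 2 * l x ^ 2 + Em ^ 2)) μ :=
      (Il.const_mul _).add I2
    have I4 : Integrable (fun x => -(2 * t) * (gm m x * l x)
        + (2 * t * Em * l x + (t ^ 2 * l x ^ 2 + Em ^ 2))) μ := ((Igml m).const_mul _).add I3
    have I1 : Integrable (fun x => gm m x ^ 2 + -(2 * Em) * gm m x) μ :=
      (Igm2 m).add ((Igm m).const_mul _)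
    have hint : ∫ x, (gm m x - Em - t * l x) ^ 2 ∂μ
        = (∫ x, gm m x ^ 2 ∂μ) - Em ^ 2 - 2 * t * (∫ x, gm m x * l x ∂μ)
          + t ^ 2 * ∫ x, l x ^ 2 ∂μ := by
      rw [h1, integral_add I1 I4,
        integral_add (Igm2 m) ((Igm m).const_mul _),
        integral_add ((Igml m).const_mul _) I3,
        integral_add (Il.const_mul _) I2,
        integral_add (Il2.const_mul _) (integrable_const _),
        integral_const_mul, integral_const_mul, integral_const_mul, integral_const_mul,
        integral_const, hintl]
      simp only [measure_univ, probReal_univ, ENNReal.toReal_one, smul_eq_mul, one_mul, mul_zero]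
      rw [← hEm]
      ring
    have h0 : 0 ≤ ∫ x, (gm m x - Em - t * l x) ^ 2 ∂μ := integral_nonneg fun x => sq_nonneg _
    rw [hint] at h0
    have h2 : t ^ 2 * (∫ x, l x ^ 2 ∂μ) ≤ t ^ 2 * (Sig * ‖v‖ ^ 2) :=
      mul_le_mul_of_nonneg_left hVl (sq_nonneg t)
    linarith
  -- limit
  have htend : Tendsto (fun m : ℕ => ∫ x, gm m x * l x ∂μ) atTop (𝓝 S) := by
    rw [← hintql]
    refine tendsto_integral_of_dominated_convergence (fun x => |q x * l x|)
      (fun m => ((hgmc m).mul hlc).aestronglyMeasurable) Iql.abs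
      (fun m => ae_of_all _ fun x => ?_) (ae_of_all _ fun x => ?_)
    · have hb : |gm m x * l x| ≤ |q x * l x| := by
        rw [abs_mul, abs_mul]
        exact mul_le_mul_of_nonneg_right (hgmq m x) (abs_nonneg _)
      simpa [Real.norm_eq_abs, abs_mul] using hb
    · refine tendsto_atTop_of_eventually_const (i₀ := ⌈|q x|⌉₊) fun m hm => ?_
      have hmq : |q x| ≤ (m:ℝ) := (Nat.le_ceil _).trans (by exact_mod_cast hm)
      have hgmx : gm m x = q x := by
        simp only [hgm]
        rw [min_eq_left ((le_abs_self _).trans hmq), max_eq_right (by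
          have h3 := neg_abs_le (q x); linarith)]
      rw [hgmx]
  have hlim : ∀ t : ℝ, 2 * t * S ≤ κ * (4 * Sig * S) + t ^ 2 * (Sig * ‖v‖ ^ 2) := fun t =>
    le_of_tendsto (htend.const_mul (2 * t)) (Filter.Eventually.of_forall fun m => hkey m t)
  -- final algebra
  rcases hSig0.eq_or_lt with hz | hpos
  · have h1 := hlim 1
    rw [← hz] at h1 ⊢
    nlinarith [h1, hκ, hS0, sq_nonneg ‖v‖]
  · have hP : 0 < Sig * ‖v‖ ^ 2 := mul_pos hpos (pow_pos (norm_pos_iff.mpr hvne) 2)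
    have h := hlim (S / (Sig * ‖v‖ ^ 2))
    have e1 : S ^ 2 / (Sig * ‖v‖ ^ 2) ≤ κ * (4 * Sig * S) := by
      have e2 : 2 * (S / (Sig * ‖v‖ ^ 2)) * S = 2 * (S ^ 2 / (Sig * ‖v‖ ^ 2)) := by ring
      have e3 : (S / (Sig * ‖v‖ ^ 2)) ^ 2 * (Sig * ‖v‖ ^ 2) = S ^ 2 / (Sig * ‖v‖ ^ 2) := by
        field_simp
      rw [e2, e3] at h
      linarith
    have e4 : S ^ 2 ≤ κ * (4 * Sig * S) * (Sig * ‖v‖ ^ 2) := (div_le_iff₀ hP).mp e1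
    rcases hS0.eq_or_lt with hSz | hSpos
    · rw [← hSz]
      have h5 : (0:ℝ) ≤ 4 * κ := by linarith
      exact mul_nonneg (mul_nonneg h5 (sq_nonneg Sig)) (sq_nonneg ‖v‖)
    · have e5 : κ * (4 * Sig * S) * (Sig * ‖v‖ ^ 2) = (4 * κ * Sig ^ 2 * ‖v‖ ^ 2) * S := by
        ring
      rw [e5] at e4
      rw [pow_two] at e4
      exact le_of_mul_le_mul_right e4 hSpos



lemma kappa_nonneg (hn : 0 < n) (μ : Measure (EuclideanSpace ℝ (Fin n)))
    [IsProbabilityMeasure μ]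
    (hmom : Integrable (fun x => ‖x‖ ^ 3) μ)
    (hcentered : ∀ i, (∫ x, x i ∂μ) = 0)
    (κ : ℝ)
    (hPoincare : ∀ g : EuclideanSpace ℝ (Fin n) → ℝ, LocallyLipschitz g → MemLp g 2 μ →
      (∫ x, g x ^ 2 ∂μ) - (∫ x, g x ∂μ) ^ 2 ≤ κ * ∫ x, ‖gradient g x‖ ^ 2 ∂μ) :
    0 ≤ κ := by
  set i0 : Fin n := ⟨0, hn⟩
  set v0 : EuclideanSpace ℝ (Fin n) := EuclideanSpace.single i0 (1:ℝ) with hv0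
  set l0 : EuclideanSpace ℝ (Fin n) → ℝ := fun x => (inner ℝ v0 x : ℝ) with hl0
  have hl0x : ∀ x, l0 x = x i0 := fun x => by
    rw [hl0, hv0]; simp [EuclideanSpace.inner_single_left]
  have hC : ContDiff ℝ 1 l0 := contDiff_const.inner ℝ contDiff_id
  have hLip : LocallyLipschitz l0 := hC.locallyLipschitz
  have hMem : MemLp l0 2 μ := by
    rw [memLp_two_iff_integrable_sq hC.continuous.aestronglyMeasurable]
    have h : (fun x => l0 x ^ 2) = fun x : EuclideanSpace ℝ (Fin n) => x i0 * x i0 :=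
      funext fun x => by rw [hl0x]; ring
    rw [h]
    exact integrable_m2 hmom i0 i0
  have h := hPoincare l0 hLip hMem
  have h1 : ∫ x, l0 x ∂μ = 0 := by rw [funext hl0x]; exact hcentered i0
  have h3 : ∫ x, ‖gradient l0 x‖ ^ 2 ∂μ = 1 := by
    have h2 : (fun x : EuclideanSpace ℝ (Fin n) => ‖gradient l0 x‖ ^ 2) = fun _ => (1:ℝ) :=
      funext fun x => by
        rw [(hasGradientAt_inner_const v0 x).gradient, hv0]
        simp [EuclideanSpace.norm_single]
    rw [h2]
    simp
  have h4 : 0 ≤ ∫ x, l0 x ^ 2 ∂μ := integral_nonneg fun x => sq_nonneg _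
  rw [h1, h3] at h
  simp at h
  linarith


end main

end SqT

open SqT in
/-- For a centered random vector with finite third moments satisfying the Poincaré
inequality with constant `κ`, the matrices `H_i = E[X_i X⊗X]` satisfy
`‖Σ H_i²‖_op ≤ 4κ·‖Cov(X)‖_op²`. -/
theorem sum_sq_three_tensor_bound {n : ℕ}
    (μ : Measure (EuclideanSpace ℝ (Fin n))) [IsProbabilityMeasure μ]
    (hmom : Integrable (fun x => ‖x‖ ^ 3) μ)
    (hcentered : ∀ i, (∫ x, x i ∂μ) = 0)
    (κ : ℝ)
    (hPoincare : ∀ g : EuclideanSpace ℝ (Fin n) → ℝ, LocallyLipschitz g → MemLp g 2 μ →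
      (∫ x, g x ^ 2 ∂μ) - (∫ x, g x ∂μ) ^ 2 ≤ κ * ∫ x, ‖gradient g x‖ ^ 2 ∂μ) :
    ‖Matrix.toEuclideanCLM (𝕜 := ℝ) (n := Fin n)
        (∑ i, ((Matrix.of fun j k => ∫ x, x i * (x j * x k) ∂μ : Matrix (Fin n) (Fin n) ℝ)) ^ 2)‖
      ≤ 4 * κ * covOpNorm μ ^ 2 := by
  rcases Nat.eq_zero_or_pos n with hn | hn
  · subst hn
    have hsub : ∀ a b : EuclideanSpace ℝ (Fin 0), a = b := fun a b =>
      PiLp.ext fun i => i.elim0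
    have hM : Matrix.toEuclideanCLM (𝕜 := ℝ) (n := Fin 0)
        (∑ i, ((Matrix.of fun j k => ∫ x, x i * (x j * x k) ∂μ :
          Matrix (Fin 0) (Fin 0) ℝ)) ^ 2) = 0 := ContinuousLinearMap.ext fun x => hsub _ _
    have hcov : Matrix.toEuclideanCLM (𝕜 := ℝ) (n := Fin 0) (covMatrix μ) = 0 :=
      ContinuousLinearMap.ext fun x => hsub _ _
    rw [hM, norm_zero, covOpNorm, hcov, norm_zero]
    norm_num
  · have hκ : 0 ≤ κ := kappa_nonneg hn μ hmom hcentered κ hPoincare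
    have hC0 : 0 ≤ 4 * κ * covOpNorm μ ^ 2 :=
      mul_nonneg (by linarith) (sq_nonneg _)
    have hcore : ∀ u : EuclideanSpace ℝ (Fin n),
        ∑ i, ∑ l, (∑ k, (∫ x, x i * (x l * x k) ∂μ) * u k) ^ 2
          ≤ 4 * κ * covOpNorm μ ^ 2 * ‖u‖ ^ 2 := fun u =>
      core μ hmom hcentered κ hκ hPoincare u _ (fun i j => rfl)
    refine ContinuousLinearMap.opNorm_le_bound _ hC0 fun u => ?_
    set y := Matrix.toEuclideanCLM (𝕜 := ℝ) (n := Fin n)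
        (∑ i, ((Matrix.of fun j k => ∫ x, x i * (x j * x k) ∂μ :
          Matrix (Fin n) (Fin n) ℝ)) ^ 2) u with hy
    -- coordinates of y
    have hTs : ∀ i j p : Fin n,
        (∫ x, x i * (x j * x p) ∂μ) = ∫ x, x i * (x p * x j) ∂μ := by
      intro i j p; congr 1; funext x; ring
    have hyj : ∀ j, y j = ∑ i, ∑ p, (∫ x, x i * (x j * x p) ∂μ) *
        (∑ l, (∫ x, x i * (x p * x l) ∂μ) * u l) := by
      intro j
      rw [hy, toEuclideanCLM_apply_coord]
      have hMjl : ∀ l, (∑ i, ((Matrix.of fun j k => ∫ x, x i * (x j * x k) ∂μ :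
          Matrix (Fin n) (Fin n) ℝ)) ^ 2) j l
          = ∑ i, ∑ p, (∫ x, x i * (x j * x p) ∂μ) * (∫ x, x i * (x p * x l) ∂μ) := by
        intro l
        rw [Matrix.sum_apply]
        refine Finset.sum_congr rfl fun i _ => ?_
        rw [pow_two, Matrix.mul_apply]
        rfl
      calc ∑ l, (∑ i, ((Matrix.of fun j k => ∫ x, x i * (x j * x k) ∂μ :
              Matrix (Fin n) (Fin n) ℝ)) ^ 2) j l * u l
          = ∑ l, ∑ i, ∑ p, ((∫ x, x i * (x j * x p) ∂μ) *
              (∫ x, x i * (x p * x l) ∂μ)) * u l := by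
            refine Finset.sum_congr rfl fun l _ => ?_
            rw [hMjl l, Finset.sum_mul]
            exact Finset.sum_congr rfl fun i _ => by rw [Finset.sum_mul]
        _ = ∑ i, ∑ l, ∑ p, ((∫ x, x i * (x j * x p) ∂μ) *
              (∫ x, x i * (x p * x l) ∂μ)) * u l := Finset.sum_comm
        _ = ∑ i, ∑ p, ∑ l, ((∫ x, x i * (x j * x p) ∂μ) *
              (∫ x, x i * (x p * x l) ∂μ)) * u l := by
            exact Finset.sum_congr rfl fun i _ => Finset.sum_comm
        _ = ∑ i, ∑ p, (∫ x, x i * (x j * x p) ∂μ) *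
              (∑ l, (∫ x, x i * (x p * x l) ∂μ) * u l) := by
            refine Finset.sum_congr rfl fun i _ => Finset.sum_congr rfl fun p _ => ?_
            rw [Finset.mul_sum]
            exact Finset.sum_congr rfl fun l _ => by ring
    -- ‖y‖² as bilinear pairing
    have hkey : ‖y‖ ^ 2 = ∑ i, ∑ p, (∑ k, (∫ x, x i * (x p * x k) ∂μ) * y k) *
        (∑ l, (∫ x, x i * (x p * x l) ∂μ) * u l) := by
      rw [norm_sq_eq]
      calc ∑ j, (y j) ^ 2
          = ∑ j, ∑ i, ∑ p, ((∫ x, x i * (x p * x j) ∂μ) * y j) *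
              (∑ l, (∫ x, x i * (x p * x l) ∂μ) * u l) := by
            refine Finset.sum_congr rfl fun j _ => ?_
            rw [pow_two]
            nth_rewrite 2 [hyj j]
            rw [Finset.mul_sum]
            refine Finset.sum_congr rfl fun i _ => ?_
            rw [Finset.mul_sum]
            refine Finset.sum_congr rfl fun p _ => ?_
            rw [hTs i j p]
            ring
        _ = ∑ i, ∑ j, ∑ p, ((∫ x, x i * (x p * x j) ∂μ) * y j) *
              (∑ l, (∫ x, x i * (x p * x l) ∂μ) * u l) := Finset.sum_comm
        _ = ∑ i, ∑ p, ∑ j, ((∫ x, x i * (x p * x j) ∂μ) * y j) *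
              (∑ l, (∫ x, x i * (x p * x l) ∂μ) * u l) :=
            Finset.sum_congr rfl fun i _ => Finset.sum_comm
        _ = ∑ i, ∑ p, (∑ k, (∫ x, x i * (x p * x k) ∂μ) * y k) *
              (∑ l, (∫ x, x i * (x p * x l) ∂μ) * u l) := by
            refine Finset.sum_congr rfl fun i _ => Finset.sum_congr rfl fun p _ => ?_
            rw [Finset.sum_mul]
    -- Cauchy–Schwarz
    have hcs : (‖y‖ ^ 2) ^ 2 ≤
        (∑ i, ∑ p, (∑ k, (∫ x, x i * (x p * x k) ∂μ) * y k) ^ 2) *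
        (∑ i, ∑ p, (∑ l, (∫ x, x i * (x p * x l) ∂μ) * u l) ^ 2) := by
      rw [hkey]
      have h := Finset.sum_mul_sq_le_sq_mul_sq (Finset.univ : Finset (Fin n × Fin n))
        (fun r => ∑ k, (∫ x, x r.1 * (x r.2 * x k) ∂μ) * y k)
        (fun r => ∑ l, (∫ x, x r.1 * (x r.2 * x l) ∂μ) * u l)
      rw [Fintype.sum_prod_type, Fintype.sum_prod_type, Fintype.sum_prod_type] at h
      exact h
    have hSy := hcore y
    have hSu := hcore u
    -- combine, note indices: hcore uses (x i * (x l * x k)) with middle index l = p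
    have h4 : (‖y‖ ^ 2) ^ 2 ≤ (4 * κ * covOpNorm μ ^ 2 * ‖y‖ ^ 2) *
        (4 * κ * covOpNorm μ ^ 2 * ‖u‖ ^ 2) := by
      refine hcs.trans (mul_le_mul hSy hSu ?_ ?_)
      · positivity
      · exact mul_nonneg hC0 (sq_nonneg _)
    set C := 4 * κ * covOpNorm μ ^ 2 with hCdef
    rcases eq_or_lt_of_le (norm_nonneg y) with hy0 | hy0
    · rw [← hy0]
      exact mul_nonneg hC0 (norm_nonneg u)
    · have ha2 : ‖y‖ ^ 2 ≤ C ^ 2 * ‖u‖ ^ 2 := by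
        have hyy : 0 < ‖y‖ ^ 2 := by positivity
        have h5 : (‖y‖ ^ 2) * (‖y‖ ^ 2) ≤ (C ^ 2 * ‖u‖ ^ 2) * (‖y‖ ^ 2) := by nlinarith [h4]
        exact le_of_mul_le_mul_right h5 hyy
      have h6 : ‖y‖ ≤ C * ‖u‖ := by
        rw [← Real.sqrt_sq (norm_nonneg y), ← Real.sqrt_sq (mul_nonneg hC0 (norm_nonneg u))]
        apply Real.sqrt_le_sqrt
        nlinarith [ha2]
      exact h6


end
end
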